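/- arXiv:2301.08469 — 2 statements merged into one kernel-verified Lean document; each statement's English description precedes it below -/
import Mathlib

section
/- For every computably enumerable transitive relation ≺ on ℕ there exists a computable relation ⊑ on ℕ that is a partial order (reflexive, transitive, antisymmetric) such that the space of ideals I(≺) is homeomorphic to the topological subspace of I(⊑) consisting of the non-principal ideals, i.e. those ideals I of ⊑ that contain no greatest element (no m ∈ I with k ⊑ m for all k ∈ I). -/
/-!
Enumerate `≺` and let `R u` be the transitive closure of the pairs enumerated before stage `u`.
Adding one pair `x ≺ y` to a transitive relation `T` only creates the pairs `(a, b)` with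
`a ⪯_T x` and `y ⪯_T b`, so the stages `R u` form a computable increasing sequence of transitive
relations whose union is `≺`.

On `ℕ ≅ ℕ × ℕ` put `(a, s) ⊑ (b, t)` iff `(a, s) = (b, t)`, or `s < t` and `R t a b`. An ideal `I`
of `≺` gives the ideal `I × ℕ` of `⊑`, which has no greatest element because its stamps are
unbounded. Conversely, in a non-principal ideal `J` of `⊑` every element lies below elements of
arbitrarily large stamp; this makes `J = π₁(J) × ℕ` and `π₁(J)` an ideal of `≺`. Both maps pull
basic open sets back to unions of basic open sets.
-/

/-- An ideal of a (transitive) relation `r` on `S`: a nonempty, downward closed,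
directed subset of `S`. -/
def IsIdeal {S : Type*} (r : S → S → Prop) (I : Set S) : Prop :=
  I.Nonempty ∧ (∀ a ∈ I, ∀ b, r b a → b ∈ I) ∧
    ∀ a ∈ I, ∀ b ∈ I, ∃ c ∈ I, r a c ∧ r b c

/-- The space of ideals of a relation `r`. -/
def IdealSpace {S : Type*} (r : S → S → Prop) : Type _ :=
  {I : Set S // IsIdeal r I}

/-- The topology on the space of ideals, generated by the basic sets
`[a] = {I | a ∈ I}` for `a : S`. -/
instance {S : Type*} (r : S → S → Prop) : TopologicalSpace (IdealSpace r) :=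
  TopologicalSpace.generateFrom {U | ∃ a : S, U = {I : IdealSpace r | a ∈ I.1}}

/-- A predicate is recursively enumerable (computably enumerable) if the partial
function `fun a => Part.assert (p a) fun _ => Part.some ()` is partial recursive.
(This is Mathlib's `REPred`, absent from this Mathlib version.) -/
def REPred' {α : Type*} [Primcodable α] (p : α → Prop) : Prop :=
  Partrec fun a => Part.assert (p a) fun _ => Part.some ()

theorem isIdeal_preimage_equiv_iff {S T : Type*} (e : S ≃ T) (r : T → T → Prop) {I : Set T} :
    IsIdeal (fun a b => r (e a) (e b)) (e ⁻¹' I) ↔ IsIdeal r I := by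
  simp only [IsIdeal, Set.Nonempty, Set.mem_preimage, e.forall_congr_left,
    e.exists_congr_left, e.apply_symm_apply]

abbrev NonprincipalIdealSpace {S : Type*} (r : S → S → Prop) : Type _ :=
  {J : IdealSpace r // ¬ ∃ m ∈ J.1, ∀ k ∈ J.1, r k m}

namespace IdealSpace

variable {S T : Type*} {r : S → S → Prop}

theorem isOpen_setOf_mem (a : S) : IsOpen {I : IdealSpace r | a ∈ I.1} :=
  TopologicalSpace.isOpen_generateFrom_of_mem ⟨a, rfl⟩

theorem continuous_iff {X : Type*} [TopologicalSpace X] {f : X → IdealSpace r} :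
    Continuous f ↔ ∀ a, IsOpen {x | a ∈ (f x).1} := by
  refine ⟨fun hf a => (isOpen_setOf_mem a).preimage hf,
    fun h => continuous_generateFrom_iff.2 ?_⟩
  rintro U ⟨a, rfl⟩
  exact h a

def homeomorphOfEquiv (e : S ≃ T) (r : T → T → Prop) :
    IdealSpace (fun a b => r (e a) (e b)) ≃ₜ IdealSpace r where
  toFun I := ⟨e.symm ⁻¹' I.1,
    (isIdeal_preimage_equiv_iff e r).1 (by rw [e.preimage_symm_preimage]; exact I.2)⟩
  invFun J := ⟨e ⁻¹' J.1, (isIdeal_preimage_equiv_iff e r).2 J.2⟩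
  left_inv I := Subtype.ext (e.preimage_symm_preimage I.1)
  right_inv J := Subtype.ext (e.symm_preimage_preimage J.1)
  continuous_toFun := continuous_iff.2 fun b => isOpen_setOf_mem (e.symm b)
  continuous_invFun := continuous_iff.2 fun a => isOpen_setOf_mem (e a)

end IdealSpace

def NonprincipalIdealSpace.homeomorphOfEquiv {S T : Type*} (e : S ≃ T) (r : T → T → Prop) :
    NonprincipalIdealSpace (fun a b => r (e a) (e b)) ≃ₜ NonprincipalIdealSpace r :=
  (IdealSpace.homeomorphOfEquiv e r).subtype fun I =>
    show _ ↔ ¬∃ m ∈ e.symm ⁻¹' I.1, ∀ k ∈ e.symm ⁻¹' I.1, r k m by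
      simp only [Set.mem_preimage, e.symm.exists_congr_left, e.symm.forall_congr_left,
        e.symm_symm, e.symm_apply_apply]

section StampOrder

variable {S : Type*} {R : ℕ → S → S → Prop}

def stampOrder (R : ℕ → S → S → Prop) (p q : S × ℕ) : Prop :=
  p = q ∨ (p.2 < q.2 ∧ R q.2 p.1 q.1)

theorem stampOrder_refl : Reflexive (stampOrder R) := fun _ => Or.inl rfl

theorem stampOrder.snd_le {p q : S × ℕ} (h : stampOrder R p q) : p.2 ≤ q.2 := by
  rcases h with rfl | ⟨hlt, -⟩
  exacts [le_rfl, hlt.le]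

theorem stampOrder.rel_of_snd_lt {p q : S × ℕ} (h : stampOrder R p q) (hlt : p.2 < q.2) :
    R q.2 p.1 q.1 := by
  rcases h with rfl | ⟨-, h⟩
  exacts [absurd hlt (lt_irrefl _), h]

theorem stampOrder_antisymm {p q : S × ℕ} (hpq : stampOrder R p q) (hqp : stampOrder R q p) :
    p = q :=
  hpq.resolve_right fun h => h.1.not_ge hqp.snd_le

theorem stampOrder_trans (hmono : Monotone R) (htrans : ∀ u, Transitive (R u)) :
    Transitive (stampOrder R) := by
  rintro p q r (rfl | ⟨hpq, hR⟩) hqr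
  · exact hqr
  rcases hqr with rfl | ⟨hqr, hR'⟩
  · exact Or.inr ⟨hpq, hR⟩
  exact Or.inr ⟨hpq.trans hqr, htrans _ (hmono hqr.le _ _ hR) hR'⟩

variable {I : Set S} {J : Set (S × ℕ)}

theorem isIdeal_preimage_fst (hmono : Monotone R) (hI : IsIdeal (fun a b => ∃ u, R u a b) I) :
    IsIdeal (stampOrder R) (Prod.fst ⁻¹' I) := by
  obtain ⟨⟨a, ha⟩, hlower, hdir⟩ := hI
  refine ⟨⟨(a, 0), ha⟩, ?_, ?_⟩
  · rintro p hp q (rfl | ⟨-, hR⟩)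
    exacts [hp, hlower _ hp _ ⟨_, hR⟩]
  · intro p hp q hq
    obtain ⟨d, hd, ⟨u, hpd⟩, ⟨v, hqd⟩⟩ := hdir _ hp _ hq
    let t := max (max u v) (max p.2 q.2) + 1
    exact ⟨(d, t), hd, Or.inr ⟨by omega, hmono (by omega) _ _ hpd⟩,
      Or.inr ⟨by omega, hmono (by omega) _ _ hqd⟩⟩

theorem not_exists_greatest_preimage_fst :
    ¬∃ m ∈ Prod.fst ⁻¹' I, ∀ k ∈ Prod.fst ⁻¹' I, stampOrder R k m := by
  rintro ⟨m, hm, hgreatest⟩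
  have := (hgreatest (m.1, m.2 + 1) hm).snd_le
  omega

section Nonprincipal

variable (hJ : IsIdeal (stampOrder R) J) (hnp : ¬∃ m ∈ J, ∀ k ∈ J, stampOrder R k m)
include hJ hnp

theorem exists_mem_stampOrder_snd_lt {p : S × ℕ} (hp : p ∈ J) :
    ∃ q ∈ J, stampOrder R p q ∧ p.2 < q.2 := by
  push Not at hnp
  obtain ⟨k, hk, hkp⟩ := hnp p hp
  obtain ⟨q, hq, hpq, hkq⟩ := hJ.2.2 p hp k hk
  refine ⟨q, hq, hpq, hpq.snd_le.lt_of_ne fun h => hkp ?_⟩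
  rcases hpq with rfl | ⟨hlt, -⟩
  exacts [hkq, absurd h hlt.ne]

theorem exists_mem_lt_snd_and_rel (hmono : Monotone R) (htrans : ∀ u, Transitive (R u))
    {p : S × ℕ} (hp : p ∈ J) (v : ℕ) : ∃ q ∈ J, v < q.2 ∧ R q.2 p.1 q.1 := by
  induction v with
  | zero =>
    obtain ⟨q, hq, hpq, hlt⟩ := exists_mem_stampOrder_snd_lt hJ hnp hp
    exact ⟨q, hq, by omega, hpq.rel_of_snd_lt hlt⟩
  | succ v ih =>
    obtain ⟨q, hq, hvq, hpq⟩ := ih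
    obtain ⟨q', hq', hqq', hlt⟩ := exists_mem_stampOrder_snd_lt hJ hnp hq
    exact ⟨q', hq', by omega, htrans _ (hmono hlt.le _ _ hpq) (hqq'.rel_of_snd_lt hlt)⟩

theorem isIdeal_image_fst (hmono : Monotone R) (htrans : ∀ u, Transitive (R u)) :
    IsIdeal (fun a b => ∃ u, R u a b) (Prod.fst '' J) := by
  refine ⟨hJ.1.image _, ?_, ?_⟩
  · rintro _ ⟨p, hp, rfl⟩ b ⟨u, hbp⟩
    obtain ⟨q, hq, huq, hpq⟩ := exists_mem_lt_snd_and_rel hJ hnp hmono htrans hp u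
    have hbq : stampOrder R (b, 0) q := Or.inr ⟨by omega, htrans _ (hmono huq.le _ _ hbp) hpq⟩
    exact ⟨(b, 0), hJ.2.1 q hq _ hbq, rfl⟩
  · rintro _ ⟨p, hp, rfl⟩ _ ⟨q, hq, rfl⟩
    obtain ⟨r, hr, hpr, hqr⟩ := hJ.2.2 p hp q hq
    obtain ⟨r', hr', hrr', hlt⟩ := exists_mem_stampOrder_snd_lt hJ hnp hr
    have above {s : S × ℕ} (hsr : stampOrder R s r) : R r'.2 s.1 r'.1 :=
      (stampOrder_trans hmono htrans hsr hrr').rel_of_snd_lt (hsr.snd_le.trans_lt hlt)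
    exact ⟨r'.1, ⟨r', hr', rfl⟩, ⟨_, above hpr⟩, ⟨_, above hqr⟩⟩

theorem preimage_fst_image_fst (hmono : Monotone R) (htrans : ∀ u, Transitive (R u)) :
    Prod.fst ⁻¹' (Prod.fst '' J) = J := by
  refine Set.Subset.antisymm ?_ (Set.subset_preimage_image _ _)
  rintro p ⟨p', hp', hfst⟩
  obtain ⟨q, hq, hlt, hpq⟩ := exists_mem_lt_snd_and_rel hJ hnp hmono htrans hp' p.2
  exact hJ.2.1 q hq p (Or.inr ⟨hlt, hfst ▸ hpq⟩)

end Nonprincipal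

def stampHomeomorph (hmono : Monotone R) (htrans : ∀ u, Transitive (R u)) :
    IdealSpace (fun a b => ∃ u, R u a b) ≃ₜ NonprincipalIdealSpace (stampOrder R) where
  toFun I := ⟨⟨Prod.fst ⁻¹' I.1, isIdeal_preimage_fst hmono I.2⟩,
    not_exists_greatest_preimage_fst⟩
  invFun J := ⟨Prod.fst '' J.1.1, isIdeal_image_fst J.1.2 J.2 hmono htrans⟩
  left_inv I := Subtype.ext (Set.image_preimage_eq _ Prod.fst_surjective)
  right_inv J := Subtype.ext (Subtype.ext (preimage_fst_image_fst J.1.2 J.2 hmono htrans))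
  continuous_toFun :=
    (IdealSpace.continuous_iff.2 fun p => IdealSpace.isOpen_setOf_mem p.1).subtype_mk _
  continuous_invFun := IdealSpace.continuous_iff.2 fun a => by
    have hunion : {J : NonprincipalIdealSpace (stampOrder R) | a ∈ Prod.fst '' J.1.1} =
        ⋃ s, Subtype.val ⁻¹' {J | (a, s) ∈ J.1} := by
      ext J
      simp
    rw [hunion]
    exact isOpen_iUnion fun s =>
      (IdealSpace.isOpen_setOf_mem (a, s)).preimage continuous_subtype_val

end StampOrder

section Stages

variable {α : Type*}

-- For transitive `T`, this is the transitive closure of `T` with the edge `x → y` added.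
def addEdge (T : α → α → Prop) (x y : α) (a b : α) : Prop :=
  T a b ∨ ((a = x ∨ T a x) ∧ (y = b ∨ T y b))

theorem le_addEdge {T : α → α → Prop} {x y : α} : T ≤ addEdge T x y := fun _ _ => Or.inl

theorem addEdge_self {T : α → α → Prop} {x y : α} : addEdge T x y x y :=
  Or.inr ⟨Or.inl rfl, Or.inl rfl⟩

theorem transitive_addEdge {T : α → α → Prop} (hT : Transitive T) (x y : α) :
    Transitive (addEdge T x y) := by
  have left {a b : α} (hab : T a b) (hb : b = x ∨ T b x) : a = x ∨ T a x := by
    rcases hb with rfl | hbx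
    exacts [Or.inr hab, Or.inr (hT hab hbx)]
  have right {a b : α} (hab : T a b) (ha : y = a ∨ T y a) : y = b ∨ T y b := by
    rcases ha with rfl | hya
    exacts [Or.inr hab, Or.inr (hT hya hab)]
  rintro a b c (hab | ⟨hax, hyb⟩) (hbc | ⟨hbx, hyc⟩)
  · exact Or.inl (hT hab hbc)
  · exact Or.inr ⟨left hab hbx, hyc⟩
  · exact Or.inr ⟨hax, right hbc hyb⟩
  · exact Or.inr ⟨hax, hyc⟩

theorem addEdge_le {T r : α → α → Prop} {x y : α} (hr : Transitive r) (hT : T ≤ r)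
    (hxy : r x y) : addEdge T x y ≤ r := by
  rintro a b (hab | ⟨hax, hyb⟩)
  · exact hT a b hab
  have hay : r a y := by
    rcases hax with rfl | hax
    exacts [hxy, hr (hT _ _ hax) hxy]
  rcases hyb with rfl | hyb
  exacts [hay, hr hay (hT _ _ hyb)]

variable [DecidableEq α]

def addEdgeList (L : List (α × α)) (e : α × α) : List (α × α) :=
  L ++ (e.1 :: (L.filter (·.2 = e.1)).map Prod.fst).flatMap fun a =>
    (e.2 :: (L.filter (·.1 = e.2)).map Prod.snd).map (Prod.mk a)

theorem mem_addEdgeList {L : List (α × α)} {e : α × α} {a b : α} :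
    (a, b) ∈ addEdgeList L e ↔ addEdge (fun a b => (a, b) ∈ L) e.1 e.2 a b := by
  obtain ⟨x, y⟩ := e
  simp only [addEdgeList, addEdge, List.mem_append, List.mem_flatMap, List.mem_cons,
    List.mem_map, List.mem_filter, decide_eq_true_eq, Prod.mk.injEq, Prod.exists,
    exists_eq_right_right, exists_and_right, exists_eq_right]
  grind

def stageList (f : ℕ → Option (α × α)) : ℕ → List (α × α)
  | 0 => []
  | u + 1 => ((f u).map (addEdgeList (stageList f u))).getD (stageList f u)

def stageRel (f : ℕ → Option (α × α)) (u : ℕ) (a b : α) : Prop := (a, b) ∈ stageList f u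

variable {f : ℕ → Option (α × α)}

theorem stageRel_zero : stageRel f 0 = ⊥ := by
  ext a b
  simp [stageRel, stageList]

theorem stageRel_succ_of_eq_none {u : ℕ} (h : f u = none) :
    stageRel f (u + 1) = stageRel f u := by
  ext a b
  simp [stageRel, stageList, h]

theorem stageRel_succ_of_eq_some {u : ℕ} {e : α × α} (h : f u = some e) :
    stageRel f (u + 1) = addEdge (stageRel f u) e.1 e.2 := by
  ext a b
  simp only [stageRel, stageList, h, Option.map_some, Option.getD_some, mem_addEdgeList]
  rfl

theorem transitive_stageRel (f : ℕ → Option (α × α)) (u : ℕ) : Transitive (stageRel f u) := by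
  induction u with
  | zero => simp [stageRel_zero, Transitive]
  | succ u ih =>
    cases h : f u with
    | none => rwa [stageRel_succ_of_eq_none h]
    | some e => rw [stageRel_succ_of_eq_some h]; exact transitive_addEdge ih _ _

theorem monotone_stageRel (f : ℕ → Option (α × α)) : Monotone (stageRel f) := by
  refine monotone_nat_of_le_succ fun u => ?_
  cases h : f u with
  | none => rw [stageRel_succ_of_eq_none h]
  | some e => rw [stageRel_succ_of_eq_some h]; exact le_addEdge

theorem stageRel_le {r : α → α → Prop} (hr : Transitive r)
    (hf : ∀ u e, f u = some e → r e.1 e.2) (u : ℕ) : stageRel f u ≤ r := by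
  induction u with
  | zero => simp [stageRel_zero]
  | succ u ih =>
    cases h : f u with
    | none => rwa [stageRel_succ_of_eq_none h]
    | some e => rw [stageRel_succ_of_eq_some h]; exact addEdge_le hr ih (hf u e h)

theorem exists_stageRel_iff {r : α → α → Prop} (hr : Transitive r)
    (hf : ∀ a b, r a b ↔ ∃ u, f u = some (a, b)) {a b : α} :
    (∃ u, stageRel f u a b) ↔ r a b := by
  refine ⟨fun ⟨u, hu⟩ => stageRel_le hr (fun u e he => (hf _ _).2 ⟨u, he⟩) u a b hu,
    fun hab => ?_⟩
  obtain ⟨u, hu⟩ := (hf a b).1 hab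
  exact ⟨u + 1, by rw [stageRel_succ_of_eq_some hu]; exact addEdge_self⟩

end Stages

section Computability

open Primrec Encodable

variable {α : Type*} [Primcodable α]

theorem primrecPred_stampOrder {R : ℕ → α → α → Prop}
    (hR : PrimrecPred fun x : ℕ × α × α => R x.1 x.2.1 x.2.2) :
    PrimrecPred fun pq : (α × ℕ) × (α × ℕ) => stampOrder R pq.1 pq.2 :=
  Primrec.eq.comp fst snd |>.or <| (nat_lt.comp (snd.comp fst) (snd.comp snd)).and <|
    hR.comp <| (snd.comp snd).pair <| (fst.comp fst).pair (fst.comp snd)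

theorem REPred'.exists_primrec_enum {p : α → Prop} (hp : REPred' p) :
    ∃ f : ℕ → Option α, Primrec f ∧ ∀ a, p a ↔ ∃ n, f n = some a := by
  obtain ⟨c, hc⟩ := Nat.Partrec.Code.exists_code.1 hp
  have hmem (n x : ℕ) : x ∈ c.eval n ↔ ∃ a, decode n = some a ∧ p a ∧ x = encode () := by
    rw [hc]
    simp [Unique.exists_iff, eq_comm]
  refine ⟨fun u => (c.evaln u.unpair.1 u.unpair.2).bind fun _ => decode u.unpair.2, ?_,
    fun a => ⟨fun ha => ?_, fun ⟨u, hu⟩ => ?_⟩⟩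
  · exact option_bind (Nat.Partrec.Code.primrec_evaln.comp
      (((fst.comp unpair).pair (const c)).pair (snd.comp unpair)))
      ((Primrec.decode.comp (snd.comp unpair)).comp fst).to₂
  · obtain ⟨k, hk⟩ := Nat.Partrec.Code.evaln_complete.1 ((hmem _ _).2 ⟨a, encodek a, ha, rfl⟩)
    exact ⟨Nat.pair k (encode a), by simp [Option.mem_def.1 hk]⟩
  · obtain ⟨x, hx, hdecode⟩ := Option.bind_eq_some_iff.1 hu
    obtain ⟨b, hb, hpb, -⟩ := (hmem _ _).1 (Nat.Partrec.Code.evaln_sound hx)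
    exact Option.some.inj (hb.symm.trans hdecode) ▸ hpb

variable [DecidableEq α]

theorem primrec_addEdgeList : Primrec₂ (addEdgeList (α := α)) := by
  have hlower : Primrec₂ fun (L : List (α × α)) (x : α) =>
      x :: (L.filter (·.2 = x)).map Prod.fst :=
    list_cons.comp snd <| list_map (PrimrecRel.listFilter (R := fun (q : α × α) x => q.2 = x)
      (Primrec.eq.comp (snd.comp fst) snd)) (fst.comp snd).to₂
  have hupper : Primrec₂ fun (L : List (α × α)) (y : α) =>
      y :: (L.filter (·.1 = y)).map Prod.snd :=
    list_cons.comp snd <| list_map (PrimrecRel.listFilter (R := fun (q : α × α) y => q.1 = y)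
      (Primrec.eq.comp (fst.comp fst) snd)) (snd.comp snd).to₂
  exact list_append.comp fst <| list_flatMap (hlower.comp fst (fst.comp snd)) <|
    list_map (hupper.comp (fst.comp fst) (snd.comp (snd.comp fst))) ((snd.comp fst).pair snd).to₂

theorem primrec_stageList {f : ℕ → Option (α × α)} (hf : Primrec f) : Primrec (stageList f) := by
  have hstep : Primrec₂ fun (u : ℕ) (L : List (α × α)) => ((f u).map (addEdgeList L)).getD L :=
    option_getD.comp (option_map (hf.comp fst) (primrec_addEdgeList.comp (snd.comp fst) snd)) snd
  refine (nat_rec₁ [] hstep).of_eq fun u => ?_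
  induction u with
  | zero => rfl
  | succ u ih => simp [stageList, ih]

theorem primrecPred_stageRel {f : ℕ → Option (α × α)} (hf : Primrec f) :
    PrimrecPred fun x : ℕ × α × α => stageRel f x.1 x.2.1 x.2.2 :=
  (PrimrecRel.exists_mem_list Primrec.eq).comp ((primrec_stageList hf).comp fst) snd |>.of_eq
    fun x => by simp [stageRel]

end Computability

theorem stmt1 (prec : ℕ → ℕ → Prop)
    (hce : REPred' fun p : ℕ × ℕ => prec p.1 p.2)
    (htrans : Transitive prec) :
    ∃ sq : ℕ → ℕ → Prop,
      ComputablePred (fun p : ℕ × ℕ => sq p.1 p.2) ∧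
      Reflexive sq ∧ Transitive sq ∧ (∀ a b, sq a b → sq b a → a = b) ∧
      Nonempty (IdealSpace prec ≃ₜ
        {J : IdealSpace sq // ¬ ∃ m ∈ J.1, ∀ k ∈ J.1, sq k m}) := by
  obtain ⟨f, hf, hfprec⟩ := hce.exists_primrec_enum
  have hprec : (fun a b => ∃ u, stageRel f u a b) = prec :=
    funext₂ fun _ _ => propext <| exists_stageRel_iff htrans fun a b => hfprec (a, b)
  subst hprec
  let e : ℕ ≃ ℕ × ℕ := Nat.pairEquiv.symm
  have hmono := monotone_stageRel f
  have hstageTrans := transitive_stageRel f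
  refine ⟨fun m n => stampOrder (stageRel f) (e m) (e n), ?_, fun _ => stampOrder_refl _,
    fun _ _ _ h h' => stampOrder_trans hmono hstageTrans h h',
    fun _ _ h h' => e.injective (stampOrder_antisymm h h'),
    ⟨(stampHomeomorph hmono hstageTrans).trans (NonprincipalIdealSpace.homeomorphOfEquiv e _).symm⟩⟩
  exact ((primrecPred_stampOrder (primrecPred_stageRel hf)).comp
    ((Primrec.unpair.comp Primrec.fst).pair (Primrec.unpair.comp Primrec.snd))).computablePred
end

section
/- There is a computable function p : ℕ → ℕ such that for every n: the relation V_{p(n)} is a preorder (reflexive and transitive); if V_n is a preorder then V_{p(n)} = V_n; and for all m, n, if V_m = V_n (as relations) then V_{p(m)} = V_{p(n)}. -/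
/-!
The function `p` sends `n` to an index of the reflexive–transitive closure of `V n`. This closure
is c.e. uniformly in `n`: `i` reaches `j` iff some finite chain `i = x₀, x₁, …, x_k = j` has all
its links `Nat.pair xₜ xₜ₊₁` halting within a common number `s` of steps, and for fixed `s` and a
fixed chain this is a primitive recursive check. An unbounded search over pairs `(s, chain)`
therefore has the closure as its domain, and currying the resulting code in `n` makes the index
computable. The closure of any relation is a preorder, equals the relation when it already is
one, and depends only on the relation, not on its index.
-/

/-- The `e`-th c.e. binary relation on `ℕ`: `i V_e j` iff `Nat.pair i j` lies in the
domain of the `e`-th partial computable function. -/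
def V (e : ℕ) : ℕ → ℕ → Prop := fun i j =>
  ((Denumerable.ofNat Nat.Partrec.Code e).eval (Nat.pair i j)).Dom

open Relation Nat.Partrec Code

theorem Relation.reflTransGen_exists_iff_of_monotone {α ι : Type*} [SemilatticeSup ι]
    [Nonempty ι] {r : ι → α → α → Prop} (hr : Monotone r) {a b : α} :
    ReflTransGen (fun x y => ∃ i, r i x y) a b ↔ ∃ i, ReflTransGen (r i) a b := by
  refine ⟨fun h => ?_, fun ⟨i, h⟩ => ReflTransGen.mono (fun _ _ hxy => ⟨i, hxy⟩) _ _ h⟩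
  induction h with
  | refl => exact ⟨Classical.arbitrary ι, .refl⟩
  | tail _ hbc ih =>
    obtain ⟨i, hab⟩ := ih
    obtain ⟨j, hbc⟩ := hbc
    exact ⟨i ⊔ j, .tail (ReflTransGen.mono (hr le_sup_left) _ _ hab) (hr le_sup_right _ _ hbc)⟩

namespace List

variable {α : Type*} {R : α → α → Prop} {a b : α} {l : List α}

theorem reflTransGen_iff_exists_isChain_cons :
    ReflTransGen R a b ↔ ∃ l, IsChain R (a :: l) ∧ (a :: l).getLast? = some b := by
  simp only [getLast?_eq_some_getLast (cons_ne_nil a _), Option.some_inj]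
  exact ⟨exists_isChain_cons_of_relationReflTransGen,
    fun ⟨l, hl, hb⟩ => relationReflTransGen_of_exists_isChain_cons l hl hb⟩

theorem isChain_cons_iff_forall_lt_getD :
    IsChain R (a :: l) ↔ ∀ t < l.length, R ((a :: l).getD t a) (l.getD t a) := by
  rw [isChain_iff_getElem]
  refine ⟨fun h t ht => ?_, fun h t ht => ?_⟩
  · have := h t (by simpa using ht)
    rw [getElem_cons_succ] at this
    simpa [getD_eq_getElem, ht, Nat.lt_succ_of_lt ht] using this
  · simp only [length_cons, Nat.add_lt_add_iff_right] at ht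
    simpa [getD_eq_getElem, ht, Nat.lt_succ_of_lt ht] using h t ht

end List

theorem PrimrecPred.isChain_cons {α β : Type*} [Primcodable α] [Primcodable β]
    {R : α → β → β → Prop} (hR : PrimrecPred fun x : α × β × β => R x.1 x.2.1 x.2.2) :
    PrimrecPred fun x : α × β × List β => List.IsChain (R x.1) (x.2.1 :: x.2.2) := by
  open Primrec in
  have hlink : PrimrecRel fun (t : ℕ) (x : α × β × List β) =>
      R x.1 ((x.2.1 :: x.2.2).getD t x.2.1) (x.2.2.getD t x.2.1) := by
    have hb := fst.comp (snd.comp (snd (α := ℕ) (β := α × β × List β)))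
    have hl := snd.comp (snd.comp (snd (α := ℕ) (β := α × β × List β)))
    simp only [List.getD_eq_getElem?_getD]
    exact hR.comp (pair (fst.comp snd) (pair
      (option_getD.comp (list_getElem?.comp (list_cons.comp hb hl) fst) hb)
      (option_getD.comp (list_getElem?.comp hl fst) hb)))
  refine (hlink.forall_mem_list.comp (list_range.comp (list_length.comp (snd.comp snd)))
    Primrec.id).of_eq fun x => ?_
  simp [List.isChain_cons_iff_forall_lt_getD]

theorem REPred.exists_of_computablePred {α β : Type*} [Primcodable α] [Denumerable β]
    {P : α × β → Prop} (hP : ComputablePred P) : REPred fun a => ∃ b, P (a, b) := by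
  obtain ⟨_, hP⟩ := hP
  have hsearch : Partrec fun a =>
      Nat.rfind (fun k => Part.some (decide (P (a, Denumerable.ofNat β k))) : ℕ →. Bool) :=
    Partrec.rfind (hP.comp (Computable.fst.pair
      ((Primrec.ofNat β).to_comp.comp Computable.snd))).to₂.partrec₂
  refine hsearch.dom_re.of_eq fun a => Nat.rfind_dom.trans ?_
  simp only [Part.mem_some_iff, true_eq_decide_iff, Part.some_dom, implies_true, and_true]
  exact ⟨fun ⟨_, h⟩ => ⟨_, h⟩,
    fun ⟨b, h⟩ => ⟨Encodable.encode b, by rwa [Denumerable.ofNat_encode]⟩⟩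

theorem REPred.exists_computable_index {P : ℕ × ℕ → Prop} (hP : REPred P) :
    ∃ p : ℕ → ℕ, Computable p ∧
      ∀ n m, ((Denumerable.ofNat Code (p n)).eval m).Dom ↔ P (n, m) := by
  have hf : Nat.Partrec fun x =>
      (Part.assert (P x.unpair) fun _ => Part.some ()).map fun _ => 0 :=
    Partrec.nat_iff.1 ((hP.comp Computable.unpair).map (Computable.const 0).to₂)
  obtain ⟨c, hc⟩ := exists_code.1 hf
  refine ⟨fun n => Encodable.encode (curry c n),
    (Primrec.encode.comp (primrec₂_curry.comp (Primrec.const c) Primrec.id)).to_comp,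
    fun n m => ?_⟩
  simp [eval_curry, hc, Part.assert]

namespace Nat.Partrec.Code

theorem eval_dom_iff_exists_evaln_isSome {c : Code} {n : ℕ} :
    (eval c n).Dom ↔ ∃ s, (evaln s c n).isSome := by
  simp only [Part.dom_iff_mem, evaln_complete, Option.isSome_iff_exists]
  exact exists_comm

theorem evaln_isSome_mono {c : Code} {n s t : ℕ} (h : s ≤ t)
    (hs : (evaln s c n).isSome) : (evaln t c n).isSome := by
  obtain ⟨x, hx⟩ := Option.isSome_iff_exists.1 hs
  exact Option.isSome_iff_exists.2 ⟨x, evaln_mono h hx⟩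

end Nat.Partrec.Code

abbrev VStage (e s : ℕ) : ℕ → ℕ → Prop := fun i j =>
  (evaln s (Denumerable.ofNat Code e) (Nat.pair i j)).isSome

theorem V_eq_exists_VStage (e : ℕ) : V e = fun i j => ∃ s, VStage e s i j :=
  funext₂ fun _ _ => propext eval_dom_iff_exists_evaln_isSome

theorem monotone_VStage (e : ℕ) : Monotone (VStage e) :=
  fun _ _ hst _ _ => evaln_isSome_mono hst

theorem primrecPred_VStage :
    PrimrecPred fun x : (ℕ × ℕ) × ℕ × ℕ => VStage x.1.1 x.1.2 x.2.1 x.2.2 := by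
  open Primrec in
  refine Primrec.primrecPred (Primrec.option_isSome.comp (primrec_evaln.comp
    (pair (pair (snd.comp fst) ((Primrec.ofNat Code).comp (fst.comp fst)))
      (Primrec₂.natPair.comp (fst.comp snd) (snd.comp snd)))) |>.of_eq fun x => ?_)
  simp

theorem reflTransGen_V_iff_exists_VStage_chain (e i j : ℕ) :
    ReflTransGen (V e) i j ↔
      ∃ q : ℕ × List ℕ, (i :: q.2).IsChain (VStage e q.1) ∧ (i :: q.2).getLast? = some j := by
  simp only [V_eq_exists_VStage, reflTransGen_exists_iff_of_monotone (monotone_VStage e),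
    List.reflTransGen_iff_exists_isChain_cons, Prod.exists]

theorem rePred_reflTransGen_V :
    REPred fun x : ℕ × ℕ => ReflTransGen (V x.1) x.2.unpair.1 x.2.unpair.2 := by
  refine (REPred.exists_of_computablePred (P := fun y : (ℕ × ℕ) × ℕ × List ℕ =>
    (y.1.2.unpair.1 :: y.2.2).IsChain (VStage y.1.1 y.2.1) ∧
      (y.1.2.unpair.1 :: y.2.2).getLast? = some y.1.2.unpair.2) ?_).of_eq fun x =>
    (reflTransGen_V_iff_exists_VStage_chain x.1 x.2.unpair.1 x.2.unpair.2).symm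
  open Primrec in
  have hi := fst.comp (Primrec.unpair.comp (snd.comp (fst (α := ℕ × ℕ) (β := ℕ × List ℕ))))
  have hj := snd.comp (Primrec.unpair.comp (snd.comp (fst (α := ℕ × ℕ) (β := ℕ × List ℕ))))
  have hl := snd.comp (snd (α := ℕ × ℕ) (β := ℕ × List ℕ))
  have hchain := (PrimrecPred.isChain_cons (R := fun a => VStage a.1 a.2)
    primrecPred_VStage).comp ((pair (fst.comp fst) (fst.comp snd)).pair (hi.pair hl))
  have hlast : PrimrecPred fun y : (ℕ × ℕ) × ℕ × List ℕ =>
      (y.1.2.unpair.1 :: y.2.2).getLast? = some y.1.2.unpair.2 :=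
    (Primrec.eq.comp (list_head?.comp (list_reverse.comp (list_cons.comp hi hl)))
      (option_some.comp hj)).of_eq fun y => by rw [List.head?_reverse]
  exact (hchain.and hlast).computablePred

theorem stmt6 :
    ∃ p : ℕ → ℕ, Computable p ∧
      (∀ n, (Reflexive (V (p n)) ∧ Transitive (V (p n))) ∧
        ((Reflexive (V n) ∧ Transitive (V n)) → V (p n) = V n)) ∧
      (∀ m n, V m = V n → V (p m) = V (p n)) := by
  obtain ⟨p, hp, hdom⟩ := REPred.exists_computable_index rePred_reflTransGen_V
  have hV : ∀ n, V (p n) = ReflTransGen (V n) := fun n =>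
    funext₂ fun i j => propext <| (hdom n (Nat.pair i j)).trans <| by rw [Nat.unpair_pair]
  refine ⟨p, hp, fun n => ⟨?_, fun ⟨hr, ht⟩ => ?_⟩, fun m n h => by rw [hV, hV, h]⟩
  · rw [hV]
    exact ⟨fun _ => .refl, fun _ _ _ => .trans⟩
  · have : Std.Refl (V n) := ⟨hr⟩
    have : IsTrans ℕ (V n) := ⟨ht⟩
    rw [hV, reflTransGen_eq_self]
end
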